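/- With the scheme setup below, viewing all matrices over ℤ: A₃ * A₃ = (n * (v - k)) • (Σ_{j ∈ ZMod n} A₀ⱼ) + (n * (v - 2k + λ)) • A₁, where the scalar coefficients v - k and v - 2k + λ are computed in ℤ. Moreover A₂ᵢ * A₃ = A₃ * A₂ᵢ = (k - λ) • A₁ for every i ∈ ZMod n. -/

import Mathlib

/-! Everything reduces to the `v × v` matrix `C = Σ_g B g`. Disjointness makes `C` a
(0,1)-matrix, and summing the difference relations over all shifts `h` gives
`C Cᵀ = Cᵀ C = k I + λ (J - I)`; comparing diagonals, every row and column of `C` has `k` ones,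
so `C J = J Cᵀ = Cᵀ J = J C = k J`. The nonzero blocks of `A₃` are `J_n ⊗ (J - C)` and
`J_n ⊗ (J - Cᵀ)`, and since `Pʲ J_n = J_n Pʲ = J_n`, multiplying the circulant blocks
`Σ_j Pʲ ⊗ M_j` of `A₂ᵢ` by them only sees `Σ_j M_j`, which is `C` or `Cᵀ`. Each block of each
product is therefore `J_n ⊗ X` with `X` a product of `C`, `Cᵀ`, `J` evaluated by these relations. -/

open Matrix Kronecker

/-- The all-ones matrix. -/
def Jmat (m : Type*) : Matrix m m ℤ := Matrix.of fun _ _ => 1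

/-- The cyclic permutation matrix `P` of order `n`, with `P a b = 1` iff `b = a + 1`. -/
def Pmat (n : ℕ) : Matrix (ZMod n) (ZMod n) ℤ := Matrix.of fun a b => if b = a + 1 then 1 else 0

/-- The power `P^i` for `i ∈ ZMod n` (well defined since `Pⁿ = I`). -/
def Ppow (n : ℕ) [NeZero n] (i : ZMod n) : Matrix (ZMod n) (ZMod n) ℤ := Pmat n ^ i.val

/-- The adjacency matrices `A₀ᵢ = blockDiagonal (Pⁱ ⊗ I_v, Pⁱ ⊗ I_v)`. -/
def A0 (n v : ℕ) [NeZero n] (i : ZMod n) :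
    Matrix ((ZMod n × Fin v) ⊕ (ZMod n × Fin v)) ((ZMod n × Fin v) ⊕ (ZMod n × Fin v)) ℤ :=
  Matrix.fromBlocks (Ppow n i ⊗ₖ 1) 0 0 (Ppow n i ⊗ₖ 1)

/-- The adjacency matrix `A₁ = blockDiagonal (J_n ⊗ (J_v - I_v), J_n ⊗ (J_v - I_v))`. -/
def A1 (n v : ℕ) :
    Matrix ((ZMod n × Fin v) ⊕ (ZMod n × Fin v)) ((ZMod n × Fin v) ⊕ (ZMod n × Fin v)) ℤ :=
  Matrix.fromBlocks (Jmat (ZMod n) ⊗ₖ (Jmat (Fin v) - 1)) 0 0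
    (Jmat (ZMod n) ⊗ₖ (Jmat (Fin v) - 1))

/-- The adjacency matrices `A₂ᵢ`, with zero diagonal blocks, upper-right block
`Σ_j Pʲ ⊗ B(i+j)` and lower-left block `Σ_j Pʲ ⊗ (B(-i-j))ᵀ`. -/
def A2 (n v : ℕ) [NeZero n] (B : ZMod n → Matrix (Fin v) (Fin v) ℤ) (i : ZMod n) :
    Matrix ((ZMod n × Fin v) ⊕ (ZMod n × Fin v)) ((ZMod n × Fin v) ⊕ (ZMod n × Fin v)) ℤ :=
  Matrix.fromBlocks 0 (∑ j : ZMod n, Ppow n j ⊗ₖ B (i + j))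
    (∑ j : ZMod n, Ppow n j ⊗ₖ (B (-i - j))ᵀ) 0

/-- The adjacency matrix `A₃`, with zero diagonal blocks, upper-right block
`J_n ⊗ (J_v - Σ_j B j)` and lower-left block `J_n ⊗ (J_v - Σ_j (B j)ᵀ)`. -/
def A3 (n v : ℕ) [NeZero n] (B : ZMod n → Matrix (Fin v) (Fin v) ℤ) :
    Matrix ((ZMod n × Fin v) ⊕ (ZMod n × Fin v)) ((ZMod n × Fin v) ⊕ (ZMod n × Fin v)) ℤ :=
  Matrix.fromBlocks 0 (Jmat (ZMod n) ⊗ₖ (Jmat (Fin v) - ∑ j : ZMod n, B j))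
    (Jmat (ZMod n) ⊗ₖ (Jmat (Fin v) - ∑ j : ZMod n, (B j)ᵀ)) 0

lemma sum_eq_zero_or_one_of_disjoint {ι R : Type*} [Fintype ι] [AddCommMonoid R] [One R]
    (f : ι → R) (h01 : ∀ i, f i = 0 ∨ f i = 1) (hdisj : ∀ i j, f i = 1 → f j = 1 → i = j) :
    ∑ i, f i = 0 ∨ ∑ i, f i = 1 := by
  by_cases hone : ∃ i, f i = 1
  · obtain ⟨i, hi⟩ := hone
    right
    rw [Finset.sum_eq_single i (fun j _ hj => (h01 j).resolve_right fun h => hj (hdisj j i h hi))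
      (fun h => absurd (Finset.mem_univ i) h), hi]
  · exact .inl (Finset.sum_eq_zero fun i _ => (h01 i).resolve_right fun h => hone ⟨i, h⟩)

section ShiftedProducts

variable {G R : Type*} [AddGroup G] [Fintype G] [NonUnitalNonAssocSemiring R] (f g : G → R)

lemma sum_mul_sum_eq_sum_sum_mul_sub :
    (∑ a, f a) * (∑ b, g b) = ∑ h, ∑ a, f a * g (a - h) := by
  rw [Finset.sum_mul_sum, Finset.sum_comm (s := Finset.univ) (t := Finset.univ)
    (f := fun h a => f a * g (a - h))]
  refine Finset.sum_congr rfl fun a _ => ?_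
  exact ((Equiv.subLeft a).sum_comp fun b => f a * g b).symm

lemma sum_mul_sum_eq_sum_sum_sub_mul :
    (∑ a, f a) * (∑ b, g b) = ∑ h, ∑ b, f (b - h) * g b := by
  rw [Finset.sum_mul_sum, Finset.sum_comm, Finset.sum_comm (s := Finset.univ) (t := Finset.univ)
    (f := fun h b => f (b - h) * g b)]
  refine Finset.sum_congr rfl fun b _ => ?_
  exact ((Equiv.subLeft b).sum_comp fun a => f a * g b).symm

end ShiftedProducts

lemma sum_eq_add_card_nsmul {G M : Type*} [Fintype G] [DecidableEq G] [AddCommMonoid M]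
    (F : G → M) (g₀ : G) (a b : M) (h₀ : F g₀ = a + b) (hne : ∀ g, g ≠ g₀ → F g = b) :
    ∑ g, F g = a + Fintype.card G • b := by
  have hF : F = fun g => (if g = g₀ then a else 0) + b := by
    funext g
    by_cases hg : g = g₀
    · simp [hg, h₀]
    · simp [hg, hne g hg]
  simp [hF, Finset.sum_add_distrib]

section DifferenceFamily

variable {G m : Type*} [AddGroup G] [Fintype G] [DecidableEq G] [Fintype m] [DecidableEq m]
  {B : G → Matrix m m ℤ} {k μ : ℤ}

lemma sum_mul_transpose_sum_eq (h1 : ∑ g, B g * (B g)ᵀ = k • 1 + μ • (Jmat m - 1))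
    (h2 : ∀ h, h ≠ 0 → ∑ g, B g * (B (g - h))ᵀ = μ • (Jmat m - 1)) :
    (∑ g, B g) * (∑ g, B g)ᵀ = k • 1 + ((Fintype.card G : ℤ) * μ) • (Jmat m - 1) := by
  rw [transpose_sum, sum_mul_sum_eq_sum_sum_mul_sub,
    sum_eq_add_card_nsmul _ 0 _ _ (by simpa only [sub_zero] using h1) h2,
    ← Nat.cast_smul_eq_nsmul ℤ, smul_smul]

lemma transpose_sum_mul_sum_eq (h1 : ∑ g, (B g)ᵀ * B g = k • 1 + μ • (Jmat m - 1))
    (h2 : ∀ h, h ≠ 0 → ∑ g, (B (g - h))ᵀ * B g = μ • (Jmat m - 1)) :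
    (∑ g, B g)ᵀ * (∑ g, B g) = k • 1 + ((Fintype.card G : ℤ) * μ) • (Jmat m - 1) := by
  rw [transpose_sum, sum_mul_sum_eq_sum_sum_sub_mul,
    sum_eq_add_card_nsmul _ 0 _ _ (by simpa only [sub_zero] using h1) h2,
    ← Nat.cast_smul_eq_nsmul ℤ, smul_smul]

end DifferenceFamily

section AllOnes

variable {m : Type*}

lemma transpose_Jmat : (Jmat m)ᵀ = Jmat m := rfl

variable [Fintype m]

lemma Jmat_mul_Jmat : Jmat m * Jmat m = (Fintype.card m : ℤ) • Jmat m := by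
  ext x y; simp [Jmat, mul_apply]

lemma Jmat_kronecker_mul_Jmat_kronecker {p q r : Type*} [Fintype q]
    (M : Matrix p q ℤ) (N : Matrix q r ℤ) :
    (Jmat m ⊗ₖ M) * (Jmat m ⊗ₖ N) = (Fintype.card m : ℤ) • (Jmat m ⊗ₖ (M * N)) := by
  rw [← mul_kronecker_mul, Jmat_mul_Jmat, smul_kronecker]

lemma diag_mul_transpose_of_zero_one {l : Type*} {C : Matrix l m ℤ}
    (h01 : ∀ x y, C x y = 0 ∨ C x y = 1) (x : l) : (C * Cᵀ) x x = ∑ z, C x z := by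
  refine Finset.sum_congr rfl fun z _ => ?_
  rcases h01 x z with h | h <;> simp [h]

variable [DecidableEq m]

lemma mul_Jmat_of_mul_transpose {C : Matrix m m ℤ} {k l : ℤ}
    (h01 : ∀ x y, C x y = 0 ∨ C x y = 1) (hCC : C * Cᵀ = k • 1 + l • (Jmat m - 1)) :
    C * Jmat m = k • Jmat m := by
  ext x y
  have hx := congr_fun₂ hCC x x
  simp only [diag_mul_transpose_of_zero_one h01, Matrix.add_apply, Matrix.smul_apply,
    Matrix.sub_apply, one_apply_eq, Jmat, of_apply, sub_self, smul_eq_mul, mul_one] at hx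
  simpa [mul_apply, Jmat] using hx

end AllOnes

section Complement

variable {m : Type*} [Fintype m] [DecidableEq m] {C : Matrix m m ℤ} {k l : ℤ}
  (h01 : ∀ x y, C x y = 0 ∨ C x y = 1) (hCC : C * Cᵀ = k • 1 + l • (Jmat m - 1))
include h01 hCC

lemma Jmat_mul_transpose_of_mul_transpose : Jmat m * Cᵀ = k • Jmat m := by
  rw [← transpose_transpose (Jmat m * Cᵀ), transpose_mul, transpose_transpose, transpose_Jmat,
    mul_Jmat_of_mul_transpose h01 hCC, transpose_smul, transpose_Jmat]

lemma mul_Jmat_sub_transpose : C * (Jmat m - Cᵀ) = (k - l) • (Jmat m - 1) := by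
  rw [mul_sub, mul_Jmat_of_mul_transpose h01 hCC, hCC]
  module

lemma Jmat_sub_mul_transpose : (Jmat m - C) * Cᵀ = (k - l) • (Jmat m - 1) := by
  rw [sub_mul, Jmat_mul_transpose_of_mul_transpose h01 hCC, hCC]
  module

lemma Jmat_sub_mul_Jmat_sub_transpose :
    (Jmat m - C) * (Jmat m - Cᵀ) =
      ((Fintype.card m : ℤ) - k) • 1 + ((Fintype.card m : ℤ) - 2 * k + l) • (Jmat m - 1) := by
  rw [sub_mul, mul_Jmat_sub_transpose h01 hCC, mul_sub, Jmat_mul_Jmat,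
    Jmat_mul_transpose_of_mul_transpose h01 hCC]
  module

end Complement

section TransposeComplement

variable {m : Type*} [Fintype m] [DecidableEq m] {C : Matrix m m ℤ} {k l : ℤ}
  (h01 : ∀ x y, C x y = 0 ∨ C x y = 1) (hCtC : Cᵀ * C = k • 1 + l • (Jmat m - 1))
include h01 hCtC

lemma transpose_mul_Jmat_sub : Cᵀ * (Jmat m - C) = (k - l) • (Jmat m - 1) := by
  simpa using mul_Jmat_sub_transpose (C := Cᵀ) (fun x y => h01 y x) (by rwa [transpose_transpose])

lemma Jmat_sub_transpose_mul : (Jmat m - Cᵀ) * C = (k - l) • (Jmat m - 1) := by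
  simpa using Jmat_sub_mul_transpose (C := Cᵀ) (fun x y => h01 y x) (by rwa [transpose_transpose])

lemma Jmat_sub_transpose_mul_Jmat_sub :
    (Jmat m - Cᵀ) * (Jmat m - C) =
      ((Fintype.card m : ℤ) - k) • 1 + ((Fintype.card m : ℤ) - 2 * k + l) • (Jmat m - 1) := by
  simpa using Jmat_sub_mul_Jmat_sub_transpose (C := Cᵀ) (fun x y => h01 y x)
    (by rwa [transpose_transpose])

end TransposeComplement

section CyclicShift

variable {n : ℕ} [NeZero n]

lemma Pmat_pow_apply (e : ℕ) (a b : ZMod n) : (Pmat n ^ e) a b = if b = a + e then 1 else 0 := by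
  induction e generalizing b with
  | zero => simp [one_apply, eq_comm]
  | succ e ih =>
    rw [pow_succ, mul_apply]
    simp only [ih]
    simp only [Pmat, of_apply, ite_mul, one_mul, zero_mul,
      Finset.sum_ite_eq', Finset.mem_univ, if_true]
    rw [Nat.cast_succ, add_assoc]

lemma Ppow_apply (i a b : ZMod n) : Ppow n i a b = if b = a + i then 1 else 0 := by
  simp [Ppow, Pmat_pow_apply]

lemma sum_Ppow : ∑ j : ZMod n, Ppow n j = Jmat (ZMod n) := by
  ext a b
  simp only [Matrix.sum_apply, Ppow_apply, ← sub_eq_iff_eq_add', eq_comm (a := b - a)]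
  simp [Jmat]

lemma Ppow_mul_Jmat (i : ZMod n) : Ppow n i * Jmat (ZMod n) = Jmat (ZMod n) := by
  ext a b
  simp [mul_apply, Ppow_apply, Jmat]

lemma Jmat_mul_Ppow (i : ZMod n) : Jmat (ZMod n) * Ppow n i = Jmat (ZMod n) := by
  ext a b
  simp only [mul_apply, Ppow_apply, Jmat, of_apply, mul_ite, mul_one, mul_zero,
    ← sub_eq_iff_eq_add, eq_comm (a := b - i)]
  simp

end CyclicShift

lemma sum_kronecker {ι l m p q α : Type*} [NonUnitalNonAssocSemiring α] (s : Finset ι)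
    (A : ι → Matrix l m α) (N : Matrix p q α) :
    (∑ i ∈ s, A i) ⊗ₖ N = ∑ i ∈ s, A i ⊗ₖ N := by
  ext
  simp [Matrix.sum_apply, Finset.sum_mul]

lemma kronecker_sum {ι l m p q α : Type*} [NonUnitalNonAssocSemiring α] (s : Finset ι)
    (M : Matrix l m α) (A : ι → Matrix p q α) :
    M ⊗ₖ (∑ i ∈ s, A i) = ∑ i ∈ s, M ⊗ₖ A i := by
  ext
  simp [Matrix.sum_apply, Finset.mul_sum]

section CirculantKronecker

variable {n : ℕ} [NeZero n] {p q r : Type*} [Fintype q]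

lemma sum_Ppow_kronecker_mul_Jmat_kronecker (M : ZMod n → Matrix p q ℤ) (N : Matrix q r ℤ) :
    (∑ j, Ppow n j ⊗ₖ M j) * (Jmat (ZMod n) ⊗ₖ N) = Jmat (ZMod n) ⊗ₖ ((∑ j, M j) * N) := by
  simp only [Matrix.sum_mul, ← mul_kronecker_mul, Ppow_mul_Jmat, kronecker_sum]

lemma Jmat_kronecker_mul_sum_Ppow_kronecker (N : Matrix p q ℤ) (M : ZMod n → Matrix q r ℤ) :
    (Jmat (ZMod n) ⊗ₖ N) * (∑ j, Ppow n j ⊗ₖ M j) = Jmat (ZMod n) ⊗ₖ (N * ∑ j, M j) := by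
  simp only [Matrix.mul_sum, ← mul_kronecker_mul, Jmat_mul_Ppow, kronecker_sum]

end CirculantKronecker

lemma fromBlocks_zero_diag_mul {l m α : Type*} [Fintype l] [Fintype m]
    [NonUnitalNonAssocSemiring α] (X : Matrix l m α) (Y : Matrix m l α) (X' : Matrix l m α)
    (Y' : Matrix m l α) :
    fromBlocks 0 X Y 0 * fromBlocks 0 X' Y' 0 = fromBlocks (X * Y') 0 0 (Y * X') := by
  simp [fromBlocks_multiply]

lemma sum_fromBlocks_diag {ι l α : Type*} [AddCommMonoid α] (s : Finset ι)
    (A : ι → Matrix l l α) :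
    ∑ i ∈ s, fromBlocks (A i) 0 0 (A i) = fromBlocks (∑ i ∈ s, A i) 0 0 (∑ i ∈ s, A i) := by
  ext (_ | _) (_ | _) <;> simp [Matrix.sum_apply]

lemma sum_A0 (n v : ℕ) [NeZero n] :
    ∑ j, A0 n v j = fromBlocks (Jmat (ZMod n) ⊗ₖ 1) 0 0 (Jmat (ZMod n) ⊗ₖ 1) := by
  simp only [A0, sum_fromBlocks_diag, ← sum_kronecker, sum_Ppow]

section Scheme

variable {n v : ℕ} [NeZero n] {B : ZMod n → Matrix (Fin v) (Fin v) ℤ}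

lemma A3_eq : A3 n v B = fromBlocks 0 (Jmat (ZMod n) ⊗ₖ (Jmat (Fin v) - ∑ g, B g))
    (Jmat (ZMod n) ⊗ₖ (Jmat (Fin v) - (∑ g, B g)ᵀ)) 0 := by
  rw [A3, transpose_sum]

lemma sum_shift_add (i : ZMod n) : ∑ j, B (i + j) = ∑ g, B g :=
  Equiv.sum_comp (Equiv.addLeft i) B

lemma sum_transpose_shift_neg_sub (i : ZMod n) : ∑ j, (B (-i - j))ᵀ = (∑ g, B g)ᵀ := by
  rw [transpose_sum]
  exact Equiv.sum_comp (Equiv.subLeft (-i)) fun g => (B g)ᵀ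

variable {k l : ℤ} (h01 : ∀ x y, (∑ g, B g) x y = 0 ∨ (∑ g, B g) x y = 1)
  (hCC : (∑ g, B g) * (∑ g, B g)ᵀ = k • 1 + l • (Jmat (Fin v) - 1))
  (hCtC : (∑ g, B g)ᵀ * (∑ g, B g) = k • 1 + l • (Jmat (Fin v) - 1))
include h01 hCC hCtC

lemma A3_mul_A3 : A3 n v B * A3 n v B =
    ((n : ℤ) * ((v : ℤ) - k)) • (∑ j, A0 n v j) + ((n : ℤ) * ((v : ℤ) - 2 * k + l)) • A1 n v := by
  rw [A3_eq, fromBlocks_zero_diag_mul, Jmat_kronecker_mul_Jmat_kronecker,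
    Jmat_kronecker_mul_Jmat_kronecker, Jmat_sub_mul_Jmat_sub_transpose h01 hCC,
    Jmat_sub_transpose_mul_Jmat_sub h01 hCtC, sum_A0, A1, fromBlocks_smul, fromBlocks_smul,
    fromBlocks_add]
  simp only [ZMod.card, Fintype.card_fin, kronecker_add, kronecker_smul, smul_add, smul_smul,
    smul_zero, add_zero]

lemma A2_mul_A3 (i : ZMod n) : A2 n v B i * A3 n v B = (k - l) • A1 n v := by
  rw [A2, A3_eq, fromBlocks_zero_diag_mul, sum_Ppow_kronecker_mul_Jmat_kronecker,
    sum_Ppow_kronecker_mul_Jmat_kronecker, sum_shift_add, sum_transpose_shift_neg_sub,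
    mul_Jmat_sub_transpose h01 hCC, transpose_mul_Jmat_sub h01 hCtC, A1, fromBlocks_smul,
    kronecker_smul, smul_zero]

lemma A3_mul_A2 (i : ZMod n) : A3 n v B * A2 n v B i = (k - l) • A1 n v := by
  rw [A2, A3_eq, fromBlocks_zero_diag_mul, Jmat_kronecker_mul_sum_Ppow_kronecker,
    Jmat_kronecker_mul_sum_Ppow_kronecker, sum_shift_add, sum_transpose_shift_neg_sub,
    Jmat_sub_mul_transpose h01 hCC, Jmat_sub_transpose_mul h01 hCtC, A1, fromBlocks_smul,
    kronecker_smul, smul_zero]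

end Scheme

/-- `A₃ A₃ = n(v-k) • Σⱼ A₀ⱼ + n(v - 2k + λ) • A₁` (with `λ = nμ` and coefficients in
`ℤ`), and `A₂ᵢ A₃ = A₃ A₂ᵢ = (k - λ) • A₁`. -/
theorem stmt_16 (v k n μ : ℕ) [NeZero n]
    (B : ZMod n → Matrix (Fin v) (Fin v) ℤ)
    (hB01 : ∀ g i j, B g i j = 0 ∨ B g i j = 1)
    (hdisj : ∀ i j (g g' : ZMod n), B g i j = 1 → B g' i j = 1 → g = g')
    (h1 : ∑ g : ZMod n, B g * (B g)ᵀ = (k : ℤ) • 1 + (μ : ℤ) • (Jmat (Fin v) - 1))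
    (h1' : ∑ g : ZMod n, (B g)ᵀ * B g = (k : ℤ) • 1 + (μ : ℤ) • (Jmat (Fin v) - 1))
    (h2 : ∀ h : ZMod n, h ≠ 0 →
      ∑ g : ZMod n, B g * (B (g - h))ᵀ = (μ : ℤ) • (Jmat (Fin v) - 1))
    (h2' : ∀ h : ZMod n, h ≠ 0 →
      ∑ g : ZMod n, (B (g - h))ᵀ * B g = (μ : ℤ) • (Jmat (Fin v) - 1)) :
    (A3 n v B * A3 n v B =
      ((n : ℤ) * ((v : ℤ) - (k : ℤ))) • (∑ j : ZMod n, A0 n v j) +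
      ((n : ℤ) * ((v : ℤ) - 2 * (k : ℤ) + ((n * μ : ℕ) : ℤ))) • A1 n v) ∧
    (∀ i : ZMod n, A2 n v B i * A3 n v B = ((k : ℤ) - ((n * μ : ℕ) : ℤ)) • A1 n v ∧
      A3 n v B * A2 n v B i = ((k : ℤ) - ((n * μ : ℕ) : ℤ)) • A1 n v) := by
  have h01 : ∀ x y, (∑ g, B g) x y = 0 ∨ (∑ g, B g) x y = 1 := fun x y => by
    simpa only [Matrix.sum_apply] using
      sum_eq_zero_or_one_of_disjoint (fun g => B g x y) (fun g => hB01 g x y) (hdisj x y)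
  have hCC := sum_mul_transpose_sum_eq h1 h2
  have hCtC := transpose_sum_mul_sum_eq h1' h2'
  rw [ZMod.card, ← Nat.cast_mul] at hCC hCtC
  exact ⟨A3_mul_A3 h01 hCC hCtC, fun i => ⟨A2_mul_A3 h01 hCC hCtC i, A3_mul_A2 h01 hCC hCtC i⟩⟩
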